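/- Let A be a finite abelian group with a nondegenerate quadratic function q. If (B,β) and (B',β') are Schellekens pairs for (A,q) with Γ(B,β) = Γ(B',β') as subgroups of A × A, then B = B' and β = β'. In other words, the assignment (B,β) ↦ Γ(B,β) is injective on Schellekens pairs. -/

import Mathlib

/-- The bicharacter `σ(a,b) = q(ab) q(a)⁻¹ q(b)⁻¹` associated to `q`. -/
def qSigma {A : Type*} [CommGroup A] (q : A → ℂˣ) (a b : A) : ℂˣ :=
  q (a * b) * (q a)⁻¹ * (q b)⁻¹

/-- `q` is a quadratic function: `q(a⁻¹) = q(a)` and the associated `σ` is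
multiplicative in each argument. -/
def IsQuadratic {A : Type*} [CommGroup A] (q : A → ℂˣ) : Prop :=
  (∀ a : A, q a⁻¹ = q a) ∧
  (∀ a b c : A, qSigma q (a * b) c = qSigma q a c * qSigma q b c) ∧
  (∀ a b c : A, qSigma q a (b * c) = qSigma q a b * qSigma q a c)

/-- `q` is nondegenerate: for every `a ≠ 1` the homomorphism `σ(a,−)` is nontrivial. -/
def IsNondeg {A : Type*} [CommGroup A] (q : A → ℂˣ) : Prop :=
  ∀ a : A, a ≠ 1 → ∃ b : A, qSigma q a b ≠ 1

/-- `(B, β)` is a Schellekens pair for `(A, q)`: `β` is symmetric, multiplicative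
in each argument, and `β(b,b) = q(b)` on the subgroup `B`. -/
def IsSchellekens {A : Type*} [CommGroup A] (q : A → ℂˣ) (B : Subgroup A)
    (β : B → B → ℂˣ) : Prop :=
  (∀ b c : B, β b c = β c b) ∧
  (∀ b c d : B, β (b * c) d = β b d * β c d) ∧
  (∀ b c d : B, β b (c * d) = β b c * β b d) ∧
  (∀ b : B, β b b = q (b : A))

/-- `Γ(B,β) = {(a, a⁻¹ b) | a ∈ A, b ∈ B, σ(c,a) = β(c,b) ∀ c ∈ B}` as a subset of `A × A`. -/
def GammaSet {A : Type*} [CommGroup A] (q : A → ℂˣ) (B : Subgroup A)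
    (β : B → B → ℂˣ) : Set (A × A) :=
  {z | ∃ b : B, z.2 = z.1⁻¹ * (b : A) ∧ ∀ c : B, qSigma q (c : A) z.1 = β c b}

/-- The bicharacter `τ((a,b),(c,d)) = σ(a,c) σ(b,d)⁻¹` on `A × A`
associated to the quadratic function `q × q⁻¹`. -/
def qTau {A : Type*} [CommGroup A] (q : A → ℂˣ) (z w : A × A) : ℂˣ :=
  qSigma q z.1 w.1 * (qSigma q z.2 w.2)⁻¹

/-!
Nondegeneracy makes `a ↦ σ(−, a)` an isomorphism of `A` onto its character group, and every
character of a subgroup `B` extends to `A`; hence every character of `B`, in particular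
`β(−, b)`, is `σ(−, a)|_B` for some `a`. So `(a, a⁻¹ b) ∈ Γ(B, β)`, and membership of such a
pair in `Γ(B', β')` forces `b ∈ B'` and `β'(−, b) = σ(−, a) = β(−, b)` on `B`.
-/

section

variable {A : Type*} [CommGroup A] {q : A → ℂˣ}

lemma qSigma_comm (q : A → ℂˣ) (a b : A) : qSigma q a b = qSigma q b a := by
  unfold qSigma
  rw [mul_comm a b, mul_right_comm]

namespace IsQuadratic

def sigmaHom (hq : IsQuadratic q) : A →* (A →* ℂˣ) :=
  MonoidHom.mk' (fun a => MonoidHom.mk' (fun c => qSigma q c a) fun c d => hq.2.1 c d a)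
    fun a b => by ext c; exact congrArg Units.val (hq.2.2 c a b)

@[simp]
lemma sigmaHom_apply (hq : IsQuadratic q) (a c : A) : hq.sigmaHom a c = qSigma q c a := rfl

lemma sigmaHom_injective (hq : IsQuadratic q) (hnd : IsNondeg q) :
    Function.Injective hq.sigmaHom := by
  refine (injective_iff_map_eq_one _).mpr fun a ha => by_contra fun hne => ?_
  obtain ⟨b, hb⟩ := hnd a hne
  apply hb
  rw [qSigma_comm, ← sigmaHom_apply hq, ha, MonoidHom.one_apply]

lemma sigmaHom_bijective [Finite A] (hq : IsQuadratic q) (hnd : IsNondeg q) :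
    Function.Bijective hq.sigmaHom :=
  (Nat.bijective_iff_injective_and_card _).mpr
    ⟨hq.sigmaHom_injective hnd, (CommGroup.card_monoidHom_of_hasEnoughRootsOfUnity A ℂ).symm⟩

lemma exists_qSigma_eq_of_character [Finite A] (hq : IsQuadratic q) (hnd : IsNondeg q)
    (B : Subgroup A) (χ : B →* ℂˣ) : ∃ a : A, ∀ c : B, qSigma q c a = χ c := by
  obtain ⟨φ, rfl⟩ := MonoidHom.domRestrict_surjective ℂ B χ
  obtain ⟨a, rfl⟩ := (hq.sigmaHom_bijective hnd).2 φ
  exact ⟨a, fun c => rfl⟩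

end IsQuadratic

namespace IsSchellekens

variable {B : Subgroup A} {β : B → B → ℂˣ}

def leftChar (hβ : IsSchellekens q B β) (b : B) : B →* ℂˣ :=
  MonoidHom.mk' (fun c => β c b) fun c d => hβ.2.1 c d b

end IsSchellekens

lemma mk_inv_mul_mem_gammaSet_iff {B : Subgroup A} {β : B → B → ℂˣ} {a x : A} :
    (a, a⁻¹ * x) ∈ GammaSet q B β ↔ ∃ hx : x ∈ B, ∀ c : B, qSigma q c a = β c ⟨x, hx⟩ := by
  constructor
  · rintro ⟨b, hb, hσ⟩
    obtain rfl : x = b := mul_left_cancel hb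
    exact ⟨b.2, hσ⟩
  · rintro ⟨hx, hσ⟩
    exact ⟨⟨x, hx⟩, rfl, hσ⟩

lemma IsSchellekens.exists_mk_inv_mul_mem_gammaSet [Finite A] (hq : IsQuadratic q)
    (hnd : IsNondeg q) {B : Subgroup A} {β : B → B → ℂˣ} (hβ : IsSchellekens q B β) (b : B) :
    ∃ a : A, (a, a⁻¹ * b) ∈ GammaSet q B β :=
  (hq.exists_qSigma_eq_of_character hnd B (hβ.leftChar b)).imp fun _ hσ =>
    mk_inv_mul_mem_gammaSet_iff.mpr ⟨b.2, hσ⟩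

lemma le_of_gammaSet_subset [Finite A] (hq : IsQuadratic q) (hnd : IsNondeg q)
    {B B' : Subgroup A} {β : B → B → ℂˣ} {β' : B' → B' → ℂˣ} (hβ : IsSchellekens q B β)
    (h : GammaSet q B β ⊆ GammaSet q B' β') : B ≤ B' := fun b hb => by
  obtain ⟨a, ha⟩ := hβ.exists_mk_inv_mul_mem_gammaSet hq hnd ⟨b, hb⟩
  exact (mk_inv_mul_mem_gammaSet_iff.mp (h ha)).1

end

/-- the assignment `(B,β) ↦ Γ(B,β)` is injective on Schellekens pairs. -/
theorem gamma_injective {A : Type*} [CommGroup A] [Fintype A]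
    (q : A → ℂˣ) (hq : IsQuadratic q) (hnd : IsNondeg q)
    (B B' : Subgroup A) (β : B → B → ℂˣ) (β' : B' → B' → ℂˣ)
    (hβ : IsSchellekens q B β) (hβ' : IsSchellekens q B' β')
    (h : GammaSet q B β = GammaSet q B' β') :
    B = B' ∧ HEq β β' := by
  obtain rfl : B = B' :=
    le_antisymm (le_of_gammaSet_subset hq hnd hβ h.le) (le_of_gammaSet_subset hq hnd hβ' h.ge)
  refine ⟨rfl, heq_of_eq (funext₂ fun c b => ?_)⟩
  obtain ⟨a, ha⟩ := hβ.exists_mk_inv_mul_mem_gammaSet hq hnd b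
  obtain ⟨_, hσ⟩ := mk_inv_mul_mem_gammaSet_iff.mp ha
  obtain ⟨_, hσ'⟩ := mk_inv_mul_mem_gammaSet_iff.mp (h ▸ ha)
  exact (hσ c).symm.trans (hσ' c)
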